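/- arXiv:1905.03117 — 5 statements merged into one kernel-verified Lean document; each statement's English description precedes it below -/
import Mathlib

section
/- Let n ≥ 1, let N = p_1·p_2···p_n be the product of the first n primes, and let a be an integer with gcd(a, N) = 1. Then the number of integers x with 0 ≤ x < N such that gcd(x − a, N) = 1 and gcd(x + a, N) = 1 equals ∏_{i=2}^{n} (p_i − 2), the product of (p − 2) over the first n primes p other than 2. -/
/-!
By the Chinese remainder theorem `ZMod N ≃+* Π i, ZMod p_i`, and `x ∓ a` is a unit modulo `N` iff
it is a unit modulo every `p_i`, so the count is the product of the counts modulo each `p_i`.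
Modulo an odd prime `p` with `a ≢ 0`, exactly the two distinct residues `±a` are excluded,
leaving `p - 2`; modulo `2` they coincide, leaving `1`.
-/

open Finset Function

def twinUnits {R : Type*} [CommRing R] (a : R) : Set R := {x | IsUnit (x - a) ∧ IsUnit (x + a)}

theorem RingEquiv.card_twinUnits {R S : Type*} [CommRing R] [CommRing S] (e : R ≃+* S) (a : R) :
    Nat.card (twinUnits a) = Nat.card (twinUnits (e a)) :=
  Nat.card_congr <| e.toEquiv.subtypeEquiv fun x => by
    simp [twinUnits, ← map_sub, ← map_add]

theorem card_twinUnits_pi {ι : Type*} [Fintype ι] {R : ι → Type*} [∀ i, CommRing (R i)]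
    (a : ∀ i, R i) : Nat.card (twinUnits a) = ∏ i, Nat.card (twinUnits (a i)) := by
  rw [← Nat.card_pi]
  refine Nat.card_congr <| (Equiv.subtypeEquivRight fun x => ?_).trans Equiv.subtypePiEquivPi
  simp [twinUnits, Pi.isUnit_iff, forall_and]

theorem twinUnits_eq_compl {F : Type*} [Field F] (a : F) : twinUnits a = {a, -a}ᶜ := by
  ext x
  simp [twinUnits, sub_eq_zero, add_eq_zero_iff_eq_neg]

theorem card_twinUnits_zmod_two {a : ZMod 2} : Nat.card (twinUnits a) = 1 := by
  rw [twinUnits_eq_compl, ZMod.neg_eq_self_mod_two, Set.pair_eq_singleton, Nat.card_coe_set_eq,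
    Set.ncard_compl, Set.ncard_singleton, Nat.card_zmod]

theorem card_twinUnits_zmod_of_odd {p : ℕ} [Fact p.Prime] (hp : Odd p) {a : ZMod p} (ha : a ≠ 0) :
    Nat.card (twinUnits a) = p - 2 := by
  rw [twinUnits_eq_compl, Nat.card_coe_set_eq, Set.ncard_compl,
    Set.ncard_pair (ZMod.ne_neg_self hp ha), Nat.card_zmod]

theorem card_filter_Ico_eq_card_zmod (N : ℕ) [NeZero N] (P : ZMod N → Prop) [DecidablePred P] :
    ((Ico (0 : ℤ) N).filter fun x : ℤ => P x).card = Nat.card {z // P z} := by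
  classical
  rw [Nat.card_eq_fintype_card, Fintype.card_subtype]
  refine card_nbij' (fun x => x) (fun z => (z.val : ℤ)) ?_ ?_ ?_ ?_
  · intro x hx
    simp_all
  · intro z hz
    simp only [coe_filter, mem_Ico, Set.mem_ofPred_eq, Int.cast_natCast, ZMod.natCast_zmod_val,
      mem_univ, true_and] at hz ⊢
    exact ⟨⟨by positivity, by exact_mod_cast z.val_lt⟩, hz⟩
  · intro x hx
    simp only [coe_filter, mem_Ico, Set.mem_ofPred_eq] at hx
    obtain ⟨⟨hx0, hxN⟩, -⟩ := hx
    exact (ZMod.val_intCast x).trans (Int.emod_eq_of_lt hx0 hxN)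
  · intro z _
    simp

theorem card_twinUnits_zmod_prod {ι : Type*} [Fintype ι] (m : ι → ℕ)
    (hm : Pairwise (Nat.Coprime on m)) (a : ℤ) :
    Nat.card (twinUnits (a : ZMod (∏ i, m i))) = ∏ i, Nat.card (twinUnits (a : ZMod (m i))) := by
  rw [(ZMod.prodEquivPi m hm).card_twinUnits, map_intCast, card_twinUnits_pi]
  rfl

theorem card_twinUnits_zmod_nth_prime {a : ℤ} {i : ℕ} (ha : (a : ZMod (Nat.nth Nat.Prime i)) ≠ 0) :
    Nat.card (twinUnits (a : ZMod (Nat.nth Nat.Prime i))) =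
      if i = 0 then 1 else Nat.nth Nat.Prime i - 2 := by
  have : Fact (Nat.nth Nat.Prime i).Prime := ⟨Nat.prime_nth_prime i⟩
  split_ifs with hi
  · subst hi
    rw [Nat.nth_prime_zero_eq_two] at ha ⊢
    exact card_twinUnits_zmod_two
  · refine card_twinUnits_zmod_of_odd ((Nat.prime_nth_prime i).odd_of_ne_two ?_) ha
    rw [← Nat.nth_prime_zero_eq_two]
    exact (Nat.nth_injective Nat.infinite_setOfPred_prime).ne hi

theorem pairwise_coprime_nth_prime : Pairwise (Nat.Coprime on Nat.nth Nat.Prime) := fun i j hij =>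
  (Nat.coprime_primes (Nat.prime_nth_prime i) (Nat.prime_nth_prime j)).mpr
    ((Nat.nth_injective Nat.infinite_setOfPred_prime).ne hij)

theorem ZMod.isUnit_intCast_iff_gcd_eq_one {N : ℕ} {x : ℤ} : IsUnit (x : ZMod N) ↔ x.gcd N = 1 := by
  rw [ZMod.coe_int_isUnit_iff_isCoprime, Int.isCoprime_iff_gcd_eq_one, Int.gcd_comm]

theorem card_filter_Ico_gcd_eq_card_twinUnits (N : ℕ) [NeZero N] (a : ℤ) :
    ((Ico (0 : ℤ) N).filter fun x => (x - a).gcd N = 1 ∧ (x + a).gcd N = 1).card =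
      Nat.card (twinUnits (a : ZMod N)) := by
  classical
  rw [← card_filter_Ico_eq_card_zmod N (· ∈ twinUnits (a : ZMod N))]
  congr! 2 with x
  simp [twinUnits, ← ZMod.isUnit_intCast_iff_gcd_eq_one]

theorem count_shifted_twin_nPrimes_general (n : ℕ)
    (N : ℕ) (hN : N = ∏ i ∈ Finset.range n, Nat.nth Nat.Prime i)
    (a : ℤ) (ha : Int.gcd a N = 1) :
    ((Finset.Ico (0 : ℤ) (N : ℤ)).filter
        (fun x => Int.gcd (x - a) N = 1 ∧ Int.gcd (x + a) N = 1)).card =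
      ∏ i ∈ Finset.Ico 1 n, (Nat.nth Nat.Prime i - 2) := by
  have : NeZero N := ⟨hN ▸ prod_ne_zero_iff.mpr fun i _ => (Nat.prime_nth_prime i).ne_zero⟩
  have ha_mod : ∀ i ∈ range n, (a : ZMod (Nat.nth Nat.Prime i)) ≠ 0 := fun i hi =>
    ZMod.ne_zero_of_gcd_eq_one (Nat.prime_nth_prime i)
      (Nat.Coprime.coprime_dvd_right (hN ▸ dvd_prod_of_mem _ hi) ha)
  subst hN
  rw [card_filter_Ico_gcd_eq_card_twinUnits, ← Fin.prod_univ_eq_prod_range,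
    card_twinUnits_zmod_prod _ (pairwise_coprime_nth_prime.comp_of_injective Fin.val_injective),
    Fin.prod_univ_eq_prod_range (fun i => Nat.card (twinUnits (a : ZMod (Nat.nth Nat.Prime i)))),
    prod_congr rfl fun i hi => card_twinUnits_zmod_nth_prime (ha_mod i hi)]
  rcases n.eq_zero_or_pos with rfl | hn
  · rfl
  rw [prod_range_eq_mul_Ico _ hn, if_pos rfl, one_mul]
  exact prod_congr rfl fun i hi => if_neg (Nat.one_le_iff_ne_zero.mp (mem_Ico.mp hi).1)

/-- Paper's Corollary 2: with `N` the product of the first `n` primes and `a`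
an integer coprime to `N`, the number of integers `0 ≤ x < N` with both
`x - a` and `x + a` coprime to `N` equals `∏_{i=2}^{n} (p_i - 2)`. -/
theorem count_shifted_twin_nPrimes (n : ℕ) (hn : 1 ≤ n)
    (N : ℕ) (hN : N = ∏ i ∈ Finset.range n, Nat.nth Nat.Prime i)
    (a : ℤ) (ha : Int.gcd a N = 1) :
    ((Finset.Ico (0 : ℤ) (N : ℤ)).filter
        (fun x => Int.gcd (x - a) N = 1 ∧ Int.gcd (x + a) N = 1)).card =
      ∏ i ∈ Finset.Ico 1 n, (Nat.nth Nat.Prime i - 2) :=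
  count_shifted_twin_nPrimes_general n N hN a ha
end

section
/- Let p be a prime, let N be a positive integer not divisible by p, and let x be a natural number. Then the number of integers a with 1 ≤ a ≤ x coprime to N equals the number of integers a with 1 ≤ a ≤ x coprime to p·N plus the number of integers b with 1 ≤ b ≤ ⌊x/p⌋ coprime to N. Equivalently, f_{p·N}(x) = f_N(x) − f_N(⌊x/p⌋) (generalized Meissel formula). -/
/-- Paper's Theorem 8 (generalized Meissel formula): if `p` is a prime not
dividing the positive integer `N`, then for every `x`, the number of
`1 ≤ a ≤ x` coprime to `N` equals the number of `1 ≤ a ≤ x` coprime to `p·N`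
plus the number of `1 ≤ b ≤ ⌊x/p⌋` coprime to `N`; equivalently
`f_{p·N}(x) = f_N(x) − f_N(⌊x/p⌋)`. -/
theorem meissel_generalized (p : ℕ) (hp : p.Prime)
    (N : ℕ) (hN : 0 < N) (hpN : ¬ p ∣ N)
    (f : ℕ → ℕ → ℕ)
    (hf : ∀ M y, f M y = ((Finset.Icc 1 y).filter (fun a => Nat.Coprime a M)).card)
    (x : ℕ) :
    f N x = f (p * N) x + f N (x / p) := by
  classical
  simp only [hf]
  have hp0 : 0 < p := hp.pos
  have hsplit := Finset.card_filter_add_card_filter_not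
    (s := (Finset.Icc 1 x).filter (fun a => Nat.Coprime a N)) (p := fun a => ¬ p ∣ a)
  rw [← hsplit]
  congr 1
  · -- coprime to N and p ∤ a ↔ coprime to p*N
    rw [Finset.filter_filter]
    congr 1
    apply Finset.filter_congr
    intro a _
    constructor
    · rintro ⟨h1, h2⟩
      rw [Nat.coprime_mul_iff_right]
      exact ⟨((Nat.Prime.coprime_iff_not_dvd hp).mpr h2).symm, h1⟩
    · intro h
      rw [Nat.coprime_mul_iff_right] at h
      exact ⟨h.2, fun hd => (Nat.Prime.coprime_iff_not_dvd hp).mp h.1.symm hd⟩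
  · -- multiples of p coprime to N ↔ b in [1, x/p] coprime to N
    rw [Finset.filter_filter]
    refine (Finset.card_bij (fun b _ => p * b) ?_ ?_ ?_).symm
    · intro b hb
      simp only [Finset.mem_filter, Finset.mem_Icc, not_not] at hb ⊢
      obtain ⟨⟨hb1, hb2⟩, hbc⟩ := hb
      refine ⟨⟨Nat.one_le_iff_ne_zero.mpr (by positivity), ?_⟩, ?_, ⟨b, rfl⟩⟩
      · calc p * b = b * p := Nat.mul_comm _ _
          _ ≤ x := (Nat.le_div_iff_mul_le hp0).mp hb2
      · rw [Nat.coprime_mul_iff_left]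
        exact ⟨((Nat.Prime.coprime_iff_not_dvd hp).mpr hpN), hbc⟩
    · intro a ha b hb hab
      exact Nat.eq_of_mul_eq_mul_left hp0 hab
    · intro a ha
      simp only [Finset.mem_filter, Finset.mem_Icc, not_not] at ha
      obtain ⟨⟨ha1, ha2⟩, hac, ⟨b, rfl⟩⟩ := ha
      refine ⟨b, ?_, rfl⟩
      simp only [Finset.mem_filter, Finset.mem_Icc]
      have hb0 : 0 < b := by
        rcases Nat.eq_zero_or_pos b with h | h
        · subst h; simp at ha1
        · exact h
      refine ⟨⟨hb0, (Nat.le_div_iff_mul_le hp0).mpr (by rw [Nat.mul_comm]; exact ha2)⟩, ?_⟩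
      exact (Nat.coprime_mul_iff_left.mp hac).2
end

section
/- Let n ≥ 1, let N = p_1·p_2···p_n be the product of the first n primes, and let q = p_n be the largest of them. Then the number of integers a with 1 ≤ a ≤ ⌊N/(q − 1)⌋ that are coprime to N equals φ(N/q) = ∏_{i=1}^{n−1}(p_i − 1), the number of (n−1)-primes below ∏_{i=1}^{n−1} p_i. In the paper's notation, f_n(∏_{1≤i≤n} p_i / (p_n − 1)) = f_{n−1}(∏_{1≤i≤n−1} p_i). -/
open Finset

private lemma coprime_nth_prime_prod (k : ℕ) :
    Nat.Coprime (Nat.nth Nat.Prime k) (∏ i ∈ Finset.range k, Nat.nth Nat.Prime i) := by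
  apply Nat.Coprime.prod_right
  intro i hi
  rw [Nat.coprime_primes (Nat.prime_nth_prime k) (Nat.prime_nth_prime i)]
  exact ((Nat.nth_strictMono Nat.infinite_setOf_prime) (Finset.mem_range.mp hi)).ne'

private lemma totient_prod_nth_primes (k : ℕ) :
    Nat.totient (∏ i ∈ Finset.range k, Nat.nth Nat.Prime i) =
      ∏ i ∈ Finset.range k, (Nat.nth Nat.Prime i - 1) := by
  induction k with
  | zero => simp
  | succ k ih =>
    rw [Finset.prod_range_succ, Finset.prod_range_succ,
      Nat.totient_mul (coprime_nth_prime_prod k).symm, ih,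
      Nat.totient_prime (Nat.prime_nth_prime k)]

/-- Count of integers in `[1, x]` coprime to `M`. -/
private def copCount (M x : ℕ) : ℕ :=
  ((Finset.Icc 1 x).filter (fun a => Nat.Coprime a M)).card

private lemma copCount_period (M t : ℕ) :
    copCount M (M + t) = Nat.totient M + copCount M t := by
  unfold copCount
  have hIcc : ∀ x : ℕ, Finset.Icc 1 x = Finset.Ico 1 (1 + x) := by
    intro x; rw [add_comm, Finset.Ico_add_one_right_eq_Icc]
  rw [hIcc, hIcc]
  have hsplit : Finset.Ico 1 (1 + (M + t)) = Finset.Ico 1 (1 + M) ∪ Finset.Ico (1 + M) (1 + M + t) := by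
    rw [Finset.Ico_union_Ico_eq_Ico (by omega) (by omega)]
    congr 1; omega
  rw [hsplit, Finset.filter_union, Finset.card_union_of_disjoint]
  · congr 1
    · have := Nat.filter_coprime_Ico_eq_totient M 1
      rw [← this]
      congr 1
      apply Finset.filter_congr
      intro a _
      simp [Nat.coprime_comm]
    · have himg : (Finset.Ico 1 (1 + t)).image (· + M) = Finset.Ico (1 + M) (1 + M + t) := by
        rw [Finset.image_add_right_Ico]; congr 1; omega
      rw [← himg, Finset.filter_image,
        Finset.card_image_of_injective _ (add_left_injective M)]
      congr 1
      apply Finset.filter_congr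
      intro a _
      simp [Nat.coprime_add_self_left]
  · exact Finset.disjoint_filter_filter (Finset.Ico_disjoint_Ico_consecutive 1 (1 + M) (1 + M + t))

private lemma copCount_dvd (M q x : ℕ) (hq : 0 < q) (hqM : Nat.Coprime q M) :
    ((Finset.Icc 1 x).filter (fun a => Nat.Coprime a M ∧ q ∣ a)).card = copCount M (x / q) := by
  unfold copCount
  apply Finset.card_bij' (fun a _ => a / q) (fun c _ => c * q)
  · intro a ha
    simp only [Finset.mem_filter, Finset.mem_Icc] at ha ⊢
    obtain ⟨⟨h1, h2⟩, hcop, hdvd⟩ := ha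
    refine ⟨⟨?_, Nat.div_le_div_right h2⟩, ?_⟩
    · exact (Nat.one_le_div_iff hq).mpr (Nat.le_of_dvd (by omega) hdvd)
    · exact Nat.Coprime.coprime_dvd_left (Nat.div_dvd_of_dvd hdvd) hcop
  · intro c hc
    simp only [Finset.mem_filter, Finset.mem_Icc] at hc ⊢
    obtain ⟨⟨h1, h2⟩, hcop⟩ := hc
    exact ⟨⟨Nat.mul_pos h1 hq, (Nat.le_div_iff_mul_le hq).mp h2⟩,
      Nat.coprime_mul_iff_left.mpr ⟨hcop, hqM⟩, dvd_mul_left q c⟩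
  · intro a ha
    simp only [Finset.mem_filter] at ha
    exact Nat.div_mul_cancel ha.2.2
  · intro c _
    exact Nat.mul_div_cancel c hq

/-- Paper's Theorem 6: with `N` the product of the first `n` primes and
`q = p_n` the largest of them, the number of integers `1 ≤ a ≤ ⌊N/(q-1)⌋`
coprime to `N` equals `φ(N/q) = ∏_{i=1}^{n-1} (p_i - 1)`. -/
theorem first_cycle_count (n : ℕ) (hn : 1 ≤ n)
    (N : ℕ) (hN : N = ∏ i ∈ Finset.range n, Nat.nth Nat.Prime i)
    (q : ℕ) (hq : q = Nat.nth Nat.Prime (n - 1)) :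
    ((Finset.Icc 1 (N / (q - 1))).filter (fun a => Nat.Coprime a N)).card =
        Nat.totient (N / q) ∧
      Nat.totient (N / q) = ∏ i ∈ Finset.range (n - 1), (Nat.nth Nat.Prime i - 1) := by
  set M := ∏ i ∈ Finset.range (n - 1), Nat.nth Nat.Prime i with hM
  have hqp : q.Prime := hq ▸ Nat.prime_nth_prime (n - 1)
  have hq2 : 2 ≤ q := hqp.two_le
  have hNMq : N = M * q := by
    have h : Finset.range n = Finset.range ((n - 1) + 1) := by congr 1; omega
    rw [hN, h, Finset.prod_range_succ, ← hq, ← hM]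
  have hqM : Nat.Coprime q M := hq ▸ coprime_nth_prime_prod (n - 1)
  have hMpos : 0 < M := Finset.prod_pos (fun i _ => (Nat.prime_nth_prime i).pos)
  have hNq : N / q = M := by rw [hNMq, Nat.mul_div_cancel M (by omega)]
  have hX : N / (q - 1) = M + M / (q - 1) := by
    obtain ⟨q', rfl⟩ : ∃ q', q = q' + 1 := ⟨q - 1, by omega⟩
    simp only [Nat.add_sub_cancel]
    rw [hNMq]
    have h1 : M * (q' + 1) = M + M * q' := by ring
    rw [h1, Nat.add_mul_div_right _ _ (show 0 < q' by omega)]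
    omega
  constructor
  · rw [hNq]
    have hiff : ∀ a : ℕ, Nat.Coprime a N ↔ (Nat.Coprime a M ∧ ¬ q ∣ a) := by
      intro a
      rw [hNMq, Nat.coprime_mul_iff_right]
      have : Nat.Coprime a q ↔ ¬ q ∣ a := by
        rw [Nat.coprime_comm]; exact hqp.coprime_iff_not_dvd
      tauto
    set X := N / (q - 1) with hXdef
    have hfilter : (Finset.Icc 1 X).filter (fun a => Nat.Coprime a N)
        = (Finset.Icc 1 X).filter (fun a => Nat.Coprime a M ∧ ¬ q ∣ a) := by
      apply Finset.filter_congr; intro a _; simpa using hiff a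
    rw [hfilter]
    have hsum :
        ((Finset.Icc 1 X).filter (fun a => Nat.Coprime a M ∧ ¬ q ∣ a)).card
          + ((Finset.Icc 1 X).filter (fun a => Nat.Coprime a M ∧ q ∣ a)).card
        = copCount M X := by
      unfold copCount
      rw [← Finset.card_union_of_disjoint]
      · congr 1
        rw [← Finset.filter_or]
        apply Finset.filter_congr
        intro a _
        tauto
      · rw [Finset.disjoint_left]
        intro a ha hb
        simp only [Finset.mem_filter] at ha hb
        exact ha.2.2 hb.2.2
    have hdvd := copCount_dvd M q X (by omega) hqM
    have hXq : X / q = M / (q - 1) := by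
      rw [hXdef, hNMq, Nat.div_div_eq_div_mul, Nat.mul_div_mul_right _ _ (show 0 < q by omega)]
    have hper : copCount M X = Nat.totient M + copCount M (M / (q - 1)) := by
      rw [hX]; exact copCount_period M _
    rw [hdvd, hXq] at hsum
    omega
  · rw [hNq, hM]
    exact totient_prod_nth_primes (n - 1)
end

section
/- Let n ≥ 1, let N = p_1·p_2···p_n be the product of the first n primes, and let q = p_n be the largest of them. Then for every natural number K, the number of integers a with 1 ≤ a ≤ ⌊K·N/(q − 1)⌋ that are coprime to N equals K·φ(N/q). Thus the interval [0, N] is divided uniformly into q − 1 segments of length N/(q − 1), each containing exactly φ(N/q) = ∏_{i=1}^{n−1}(p_i − 1) n-primes. -/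
lemma count_coprime_add (M x : ℕ) :
    ((Finset.Icc 1 (x + M)).filter (fun a => Nat.Coprime a M)).card =
    ((Finset.Icc 1 x).filter (fun a => Nat.Coprime a M)).card + M.totient := by
  have hs : Finset.Icc 1 (x + M) = Finset.Ico 1 (x+1) ∪ Finset.Ico (x+1) (x+1+M) := by
    rw [Finset.Ico_union_Ico_eq_Ico (by omega) (by omega),
      show x+1+M = (x+M)+1 by omega, Finset.Ico_add_one_right_eq_Icc]
  rw [hs, Finset.filter_union, Finset.card_union_of_disjoint
    (Finset.disjoint_filter_filter (Finset.Ico_disjoint_Ico_consecutive 1 (x+1) (x+1+M))),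
    ← Finset.Ico_add_one_right_eq_Icc]
  congr 1
  rw [show (Finset.Ico (x+1) (x+1+M)).filter (fun a => Nat.Coprime a M)
      = (Finset.Ico (x+1) (x+1+M)).filter (fun a => Nat.Coprime M a) from
    Finset.filter_congr (fun a _ => by rw [Nat.coprime_comm])]
  exact Nat.filter_coprime_Ico_eq_totient M (x+1)

lemma count_coprime_mul_add (M x m : ℕ) :
    ((Finset.Icc 1 (m * M + x)).filter (fun a => Nat.Coprime a M)).card =
    m * M.totient + ((Finset.Icc 1 x).filter (fun a => Nat.Coprime a M)).card := by
  induction m with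
  | zero => simp
  | succ m ih =>
    rw [show (m+1) * M + x = (m * M + x) + M by ring, count_coprime_add, ih]
    ring

/-- Paper's Theorem 7: with `N` the product of the first `n` primes and
`q = p_n` the largest of them, for every natural number `K` the number of
integers `1 ≤ a ≤ ⌊K·N/(q-1)⌋` coprime to `N` equals `K·φ(N/q)`: the interval
`[0, N]` splits into `q - 1` uniform segments each containing exactly
`φ(N/q) = ∏_{i=1}^{n-1}(p_i - 1)` n-primes. -/
theorem uniform_cycles_count (n : ℕ) (hn : 1 ≤ n)
    (N : ℕ) (hN : N = ∏ i ∈ Finset.range n, Nat.nth Nat.Prime i)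
    (q : ℕ) (hq : q = Nat.nth Nat.Prime (n - 1)) (K : ℕ) :
    ((Finset.Icc 1 (K * N / (q - 1))).filter (fun a => Nat.Coprime a N)).card =
      K * Nat.totient (N / q) := by
  set M := ∏ i ∈ Finset.range (n-1), Nat.nth Nat.Prime i with hM
  have hqp : q.Prime := hq ▸ Nat.prime_nth_prime (n-1)
  have hNMq : N = M * q := by
    have h1 : n - 1 + 1 = n := by omega
    rw [hN, hq, hM, ← Finset.prod_range_succ, h1]
  have hq2 : 2 ≤ q := hqp.two_le
  have hcoprime : Nat.Coprime q M := by
    rw [hM]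
    apply Nat.Coprime.prod_right
    intro i hi
    have hne : Nat.nth Nat.Prime i ≠ q := by
      rw [hq]
      intro h
      have := Nat.nth_injective Nat.infinite_setOf_prime h
      simp only [Finset.mem_range] at hi
      omega
    exact (Nat.coprime_primes hqp (Nat.prime_nth_prime i)).mpr (Ne.symm hne)
  have hMpos : 0 < M := Finset.prod_pos (fun i _ => (Nat.prime_nth_prime i).pos)
  set r := K * M / (q - 1) with hr
  have hx : K * N / (q - 1) = K * M + r := by
    obtain ⟨s, hs⟩ : ∃ s, q = s + 1 := ⟨q-1, by omega⟩
    rw [hNMq, hr, show K * (M * q) = (q-1) * (K * M) + K * M by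
      rw [hs, Nat.add_sub_cancel]; ring,
      Nat.mul_add_div (by omega : 0 < q - 1)]
  have hxq : (K * M + r) / q = r := by
    rw [← hx, Nat.div_div_eq_div_mul, hNMq, hr,
      show K * (M * q) = (K * M) * q by ring,
      Nat.mul_div_mul_right _ _ (by omega : 0 < q)]
  rw [hx]
  have hsplit : ∀ a : ℕ, Nat.Coprime a N ↔ (Nat.Coprime a M ∧ ¬ q ∣ a) := by
    intro a
    have h2 : Nat.Coprime a q ↔ ¬ q ∣ a := by
      rw [Nat.coprime_comm]; exact hqp.coprime_iff_not_dvd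
    rw [hNMq, Nat.coprime_mul_iff_right, h2]
  rw [Finset.filter_congr (fun a _ => hsplit a : ∀ a ∈ Finset.Icc 1 (K*M+r), _)]
  have hmul : ((Finset.Icc 1 (K*M+r)).filter (fun a => Nat.Coprime a M ∧ q ∣ a)).card
      = ((Finset.Icc 1 r).filter (fun a => Nat.Coprime a M)).card := by
    apply Finset.card_bij (fun a _ => a / q)
    · intro a ha
      simp only [Finset.mem_filter, Finset.mem_Icc] at ha ⊢
      obtain ⟨⟨h1, h2⟩, hcop, b, rfl⟩ := ha
      have hb1 : 1 ≤ b := by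
        rcases Nat.eq_zero_or_pos b with rfl | h
        · simp at h1
        · exact h
      refine ⟨⟨?_, ?_⟩, ?_⟩
      · rw [Nat.mul_div_cancel_left _ (by omega : 0 < q)]
        nlinarith
      · rw [← hxq]; exact Nat.div_le_div_right h2
      · rw [Nat.mul_div_cancel_left _ (by omega : 0 < q)]
        exact Nat.Coprime.coprime_dvd_left ⟨q, mul_comm q b⟩ hcop
    · intro a ha a' ha' h
      simp only [Finset.mem_filter, Finset.mem_Icc] at ha ha'
      obtain ⟨_, _, b, rfl⟩ := ha
      obtain ⟨_, _, b', rfl⟩ := ha'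
      rw [Nat.mul_div_cancel_left _ (by omega : 0 < q),
        Nat.mul_div_cancel_left _ (by omega : 0 < q)] at h
      rw [h]
    · intro b hb
      simp only [Finset.mem_filter, Finset.mem_Icc] at hb
      obtain ⟨⟨hb1, hb2⟩, hbcop⟩ := hb
      refine ⟨q * b, ?_, ?_⟩
      · simp only [Finset.mem_filter, Finset.mem_Icc]
        refine ⟨⟨by nlinarith, ?_⟩, Nat.coprime_mul_iff_left.mpr ⟨hcoprime, hbcop⟩, ⟨b, rfl⟩⟩
        rw [← hxq] at hb2
        calc q * b = b * q := mul_comm q b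
          _ ≤ K * M + r := (Nat.le_div_iff_mul_le (by omega : 0 < q)).mp hb2
      · rw [Nat.mul_div_cancel_left _ (by omega : 0 < q)]
  have hadd : ((Finset.Icc 1 (K*M+r)).filter (fun a => Nat.Coprime a M ∧ q ∣ a)).card
      + ((Finset.Icc 1 (K*M+r)).filter (fun a => Nat.Coprime a M ∧ ¬ q ∣ a)).card
      = ((Finset.Icc 1 (K*M+r)).filter (fun a => Nat.Coprime a M)).card := by
    rw [← Finset.filter_filter, ← Finset.filter_filter]
    exact Finset.card_filter_add_card_filter_not _
  have hNq : N / q = M := by rw [hNMq, Nat.mul_div_cancel _ (by omega : 0 < q)]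
  rw [hNq]
  have hcount := count_coprime_mul_add M r K
  omega
end

section
/- Let N be a squarefree positive integer, let q be a prime divisor of N, and let K be a natural number. Then the number of integers a with 1 ≤ a ≤ ⌊K·N/(q − 1)⌋ that are coprime to N equals K·φ(N/q). Hence for each prime divisor q of N, the interval [0, N] is divided uniformly into q − 1 cycles of length N/(q − 1), each containing exactly φ(N/q) integers coprime to N. -/
/-!
Write `N = q m` with `q ∤ m` and let `C_m(x)` count the `1 ≤ a ≤ x` coprime to `m`. Those `a`
split into the ones prime to `q`, which are exactly the ones coprime to `N`, and the multiples
`q b` with `b ≤ ⌊x / q⌋` coprime to `m`; so the count for `N` is `C_m(x) - C_m(⌊x / q⌋)`.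
For `x = ⌊q K m / (q - 1)⌋ = K m + s` with `s = ⌊K m / (q - 1)⌋` one has `⌊x / q⌋ = s`, and
coprimality to `m` is `m`-periodic, so `C_m(s + K m) - C_m(s) = K φ(m)`.
-/

open Finset

namespace Nat

def coprimeCount (m x : ℕ) : ℕ := #{a ∈ Ioc 0 x | a.Coprime m}

theorem coprimeCount_add_self (m x : ℕ) :
    coprimeCount m (x + m) = coprimeCount m x + φ m := by
  rw [coprimeCount, ← Ioc_union_Ioc_eq_Ioc (Nat.zero_le x) (Nat.le_add_right x m), filter_union,
    card_union_of_disjoint (disjoint_filter_filter (Ioc_disjoint_Ioc_of_le le_rfl)),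
    ← Ico_add_one_add_one_eq_Ioc x, ← filter_coprime_Ico_eq_totient m (x + 1), add_right_comm]
  simp only [coprimeCount, coprime_comm]

theorem coprimeCount_add_mul (m x K : ℕ) :
    coprimeCount m (x + K * m) = coprimeCount m x + K * φ m := by
  induction K with
  | zero => simp
  | succ K ih =>
    rw [add_mul, one_mul, ← add_assoc, coprimeCount_add_self, ih, add_mul, one_mul, add_assoc]

theorem coprimeCount_prime_mul_add {q : ℕ} (hq : q.Prime) {m : ℕ} (hqm : ¬ q ∣ m) (x : ℕ) :
    coprimeCount (q * m) x + coprimeCount m (x / q) = coprimeCount m x := by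
  have hndvd : #{a ∈ Ioc 0 x | a.Coprime (q * m)} = #{a ∈ Ioc 0 x | a.Coprime m ∧ ¬ q ∣ a} := by
    refine congrArg card (filter_congr fun a _ ↦ ?_)
    rw [coprime_mul_iff_right, coprime_comm (m := q), hq.coprime_iff_not_dvd, and_comm]
  have hdvd : #{a ∈ Ioc 0 x | a.Coprime m ∧ q ∣ a} = coprimeCount m (x / q) := by
    refine card_nbij' (· / q) (q * ·) ?_ ?_ (fun a ha ↦ Nat.mul_div_cancel' (mem_filter.1 ha).2.2)
      (fun b _ ↦ Nat.mul_div_cancel_left b hq.pos)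
    · intro a ha
      simp only [mem_coe, mem_filter, mem_Ioc] at ha ⊢
      obtain ⟨⟨ha0, hax⟩, ham, hqa⟩ := ha
      exact ⟨⟨Nat.div_pos (Nat.le_of_dvd ha0 hqa) hq.pos, Nat.div_le_div_right hax⟩,
        ham.coprime_dvd_left (Nat.div_dvd_of_dvd hqa)⟩
    · intro b hb
      simp only [mem_coe, mem_filter, mem_Ioc] at hb ⊢
      obtain ⟨⟨hb0, hbx⟩, hbm⟩ := hb
      exact ⟨⟨Nat.mul_pos hq.pos hb0, mul_comm b q ▸ (Nat.le_div_iff_mul_le hq.pos).1 hbx⟩,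
        (hq.coprime_iff_not_dvd.2 hqm).mul_left hbm, dvd_mul_right q b⟩
  rw [← hdvd, coprimeCount, coprimeCount, hndvd, ← filter_filter, ← filter_filter, add_comm,
    card_filter_add_card_filter_not]

theorem mul_div_sub_one_eq_add_div {q : ℕ} (hq : 1 < q) (r : ℕ) :
    q * r / (q - 1) = r + r / (q - 1) := by
  obtain ⟨s, rfl⟩ : ∃ s, q = s + 1 := ⟨q - 1, by omega⟩
  rw [Nat.add_sub_cancel, add_mul, one_mul, add_comm, Nat.add_mul_div_left _ _ (by omega),
    add_comm]

theorem mul_div_sub_one_div_self {q : ℕ} (hq : 0 < q) (r : ℕ) :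
    q * r / (q - 1) / q = r / (q - 1) := by
  rw [Nat.div_div_eq_div_mul, mul_comm (q - 1), Nat.mul_div_mul_left _ _ hq]

theorem coprimeCount_prime_mul_mul_div_sub_one {q : ℕ} (hq : q.Prime) {m : ℕ} (hqm : ¬ q ∣ m)
    (K : ℕ) : coprimeCount (q * m) (q * (K * m) / (q - 1)) = K * φ m := by
  have hsplit := coprimeCount_prime_mul_add hq hqm (q * (K * m) / (q - 1))
  rw [mul_div_sub_one_div_self hq.pos, mul_div_sub_one_eq_add_div hq.one_lt, add_comm (K * m),
    coprimeCount_add_mul] at hsplit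
  rw [mul_div_sub_one_eq_add_div hq.one_lt, add_comm (K * m)]
  omega

end Nat

theorem mPrime_distribution_general (N : ℕ) (hsq : Squarefree N)
    (q : ℕ) (hq : q.Prime) (hqN : q ∣ N) (K : ℕ) :
    ((Finset.Icc 1 (K * N / (q - 1))).filter (fun a => Nat.Coprime a N)).card =
      K * Nat.totient (N / q) := by
  obtain ⟨m, rfl⟩ := hqN
  have hqm : ¬ q ∣ m := fun h ↦ hq.one_lt.ne' ((Nat.squarefree_mul_iff.1 hsq).1.eq_one_of_dvd h)
  rw [Nat.mul_div_cancel_left m hq.pos, mul_left_comm,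
    ← Nat.coprimeCount_prime_mul_mul_div_sub_one hq hqm, Nat.coprimeCount,
    ← Icc_add_one_left_eq_Ioc, zero_add]

/-- Paper's Theorem 9/9a (M-prime distribution formula): for a squarefree
positive integer `N`, a prime divisor `q` of `N`, and any natural number `K`,
the number of integers `1 ≤ a ≤ ⌊K·N/(q-1)⌋` coprime to `N` equals
`K·φ(N/q)`. -/
theorem mPrime_distribution (N : ℕ) (hN : 0 < N) (hsq : Squarefree N)
    (q : ℕ) (hq : q.Prime) (hqN : q ∣ N) (K : ℕ) :
    ((Finset.Icc 1 (K * N / (q - 1))).filter (fun a => Nat.Coprime a N)).card =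
      K * Nat.totient (N / q) :=
  mPrime_distribution_general N hsq q hq hqN K
end
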